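/- Let U be a separable metric space into which every separable metric space isometrically embeds (an 𝔖-universal space), and let Q be a countable dense subset of U. Then the class of pseudo-cones of Q equals the class 𝔖 of all separable metric spaces: pc(Q) = 𝔖 (up to isometry, every separable metric space is a pseudo-cone of Q, and every pseudo-cone of Q is separable). -/

import Mathlib

open Metric Filter Set
open scoped ENNReal NNReal Topology

noncomputable section

universe u v

/-! ### Scaling of metric spaces -/

/-- The metric space obtained from `m` by multiplying the metric by `h > 0`
(the space `hX` of the paper). -/
def scaleMS {X : Type*} (h : ℝ) (hh : 0 < h) (m : MetricSpace X) : MetricSpace X := by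
  letI := m
  exact MetricSpace.ofDistTopology (fun x y => h * dist x y)
    (fun x => by simp)
    (fun x y => by simp [dist_comm])
    (fun x y z => by
      show h * dist x z ≤ h * dist x y + h * dist y z
      have := dist_triangle x y z
      nlinarith)
    (fun s => by
      rw [Metric.isOpen_iff]
      constructor
      · rintro H x hx
        obtain ⟨ε, hε, h'⟩ := H x hx
        refine ⟨h * ε, by positivity, fun y (hy : h * dist x y < h * ε) => h' ?_⟩
        have := lt_of_mul_lt_mul_left hy hh.le
        simpa [Metric.mem_ball, dist_comm] using this
      · rintro H x hx
        obtain ⟨ε, hε, h'⟩ := H x hx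
        refine ⟨ε / h, by positivity, fun y hy => h' y ?_⟩
        have hb : dist x y < ε / h := by
          have : dist y x < ε / h := hy
          simpa [dist_comm] using this
        show h * dist x y < ε
        calc h * dist x y < h * (ε / h) := mul_lt_mul_of_pos_left hb hh
          _ = ε := by field_simp)
    (fun x y hxy => by
      have hd : dist x y = 0 := by
        have h0 : dist x y ≥ 0 := dist_nonneg
        have : h * dist x y = 0 := hxy
        nlinarith
      exact eq_of_dist_eq_zero hd)

/-- The scaled metric on a subset `A` of a metric space (the space `hA`). -/
def scaledSubMS {X : Type*} [MetricSpace X] (A : Set X) (h : ℝ) (hh : 0 < h) :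
    MetricSpace A := scaleMS h hh inferInstance

/-! ### The Gromov–Hausdorff distance and pseudo-cones -/

/-- The Gromov–Hausdorff distance between two (arbitrary) metric spaces: the infimum of the
Hausdorff distances between isometric copies of the two spaces inside a common metric
space. -/
def ghDist (X : Type u) (Y : Type v) [MetricSpace X] [MetricSpace Y] : ℝ≥0∞ :=
  ⨅ (Z : Type (max u v)) (_ : MetricSpace Z) (f : X → Z) (g : Y → Z)
    (_ : Isometry f) (_ : Isometry g),
      EMetric.hausdorffEdist (Set.range f) (Set.range g)

/-- `P` is a pseudo-cone of `X` if it is the Gromov–Hausdorff limit of a sequence `uᵢAᵢ`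
of rescaled subsets of `X`. -/
def IsPseudoCone (X : Type u) [MetricSpace X] (P : Type v) [MetricSpace P] : Prop :=
  ∃ (A : ℕ → Set X) (u : ℕ → ℝ) (hu : ∀ i, 0 < u i),
    Tendsto (fun i => @ghDist ↥(A i) P (scaledSubMS (A i) (u i) (hu i)) _) atTop (𝓝 0)

/-- `P` is a pseudo-cone of `X` approximated by a sequence of *compact* subsets of `X`
(`P ∈ kpc(X)`). -/
def IsCompactPseudoCone (X : Type u) [MetricSpace X] (P : Type v) [MetricSpace P] : Prop :=
  ∃ (A : ℕ → Set X) (u : ℕ → ℝ) (hu : ∀ i, 0 < u i),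
    (∀ i, IsCompact (A i)) ∧
    Tendsto (fun i => @ghDist ↥(A i) P (scaledSubMS (A i) (u i) (hu i)) _) atTop (𝓝 0)

/-! ### Assouad dimensions -/

/-- The set `𝒜(X)` of Assouad exponents: `β > 0` such that for some `C > 0` every bounded
set `S` can be covered, for every `r > 0`, by at most `C (δ(S)/r)^β` bounded sets of
diameter at most `r`. -/
def assouadExpSet (X : Type u) [MetricSpace X] : Set ℝ :=
  {β | 0 < β ∧ ∃ C : ℝ, 0 < C ∧ ∀ S : Set X, Bornology.IsBounded S → ∀ r : ℝ, 0 < r →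
    ∃ F : Finset (Set X), (∀ t ∈ F, Bornology.IsBounded t ∧ Metric.diam t ≤ r) ∧
      S ⊆ ⋃ t ∈ F, t ∧ (F.card : ℝ) ≤ C * (Metric.diam S / r) ^ β}

/-- The Assouad dimension of a metric space, with values in `ℝ≥0∞`
(equal to `∞` if no exponent works, since `sInf ∅ = ⊤`). -/
def assouadDim (X : Type u) [MetricSpace X] : ℝ≥0∞ :=
  sInf (ENNReal.ofReal '' assouadExpSet X)

/-- The set `𝓑(X)`: exponents `β > 0` such that for some `C > 0` every finite subset `A`
of `X` satisfies `card A ≤ C (δ(A)/α(A))^β`, where `δ` is the diameter and `α` the minimal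
positive separation. -/
def assouadFinSet (X : Type u) [MetricSpace X] : Set ℝ :=
  {β | 0 < β ∧ ∃ C : ℝ, 0 < C ∧ ∀ A : Finset X,
    (A.card : ℝ) ≤ C * (Metric.diam (A : Set X) / Set.infsep (A : Set X)) ^ β}

/-- The lower Assouad dimension of a metric space: the supremum of all `β > 0` such that
for some `C > 0` every finite set `S` satisfies `card S ≥ C (δ(S)/α(S))^β`. -/
def lowerAssouadDim (X : Type u) [MetricSpace X] : ℝ≥0∞ :=
  sSup (ENNReal.ofReal ''
    {β : ℝ | 0 < β ∧ ∃ C : ℝ, 0 < C ∧ ∀ S : Finset X,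
      C * (Metric.diam (S : Set X) / Set.infsep (S : Set X)) ^ β ≤ (S.card : ℝ)})

/-- A metric space is doubling if there is `N` such that every bounded set `S` is contained
in the union of at most `N` closed balls of radius `δ(S)/2`. -/
def IsDoublingSpace (X : Type u) [MetricSpace X] : Prop :=
  ∃ N : ℕ, ∀ S : Set X, Bornology.IsBounded S →
    ∃ F : Finset X, F.card ≤ N ∧ S ⊆ ⋃ x ∈ F, Metric.closedBall x (Metric.diam S / 2)

/-! ### Quasi-symmetric maps and the conformal Assouad dimension -/

/-- `f : X → Y` is a quasi-symmetric map: a homeomorphism which is `η`-quasi-symmetric for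
some homeomorphism `η` of `[0,∞)` (modelled as `ℝ≥0`). -/
def IsQuasiSymmetric {X : Type u} {Y : Type v} [MetricSpace X] [MetricSpace Y]
    (f : X → Y) : Prop :=
  IsHomeomorph f ∧ ∃ η : ℝ≥0 → ℝ≥0, IsHomeomorph η ∧
    ∀ (t : ℝ≥0) (x y z : X), dist x y ≤ (t : ℝ) * dist x z →
      dist (f x) (f y) ≤ (η t : ℝ) * dist (f x) (f z)

/-- The conformal Assouad dimension: the infimum of the Assouad dimensions of all
quasi-symmetric images of `X`. -/
def confAssouadDim (X : Type u) [MetricSpace X] : ℝ≥0∞ :=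
  ⨅ (Y : Type u) (_ : MetricSpace Y) (f : X → Y) (_ : IsQuasiSymmetric f), assouadDim Y

/-! ### Ultralimits -/

/-- The limit of a sequence in `ℝ≥0∞` along an ultrafilter (it always exists, by
compactness of `ℝ≥0∞`). -/
def ultraLim (𝒰 : Ultrafilter ℕ) (f : ℕ → ℝ≥0∞) : ℝ≥0∞ := (𝒰.map f).lim

theorem tendsto_ultraLim (𝒰 : Ultrafilter ℕ) (f : ℕ → ℝ≥0∞) :
    Tendsto f 𝒰 (𝓝 (ultraLim 𝒰 f)) := by
  have := (𝒰.map f).le_nhds_lim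
  rwa [Ultrafilter.coe_map] at this

theorem ultraLim_eq (𝒰 : Ultrafilter ℕ) {f : ℕ → ℝ≥0∞} {a : ℝ≥0∞}
    (h : Tendsto f 𝒰 (𝓝 a)) : ultraLim 𝒰 f = a :=
  tendsto_nhds_unique (tendsto_ultraLim 𝒰 f) h

/-- Type synonym for the product `∀ i, X i`, carrying the ultralimit
pseudo-extended-metric `edist x y = lim_𝒰 edist (x i) (y i)`. -/
def PreUltralimit (𝒰 : Ultrafilter ℕ) (X : ℕ → Type u) : Type u := ∀ i, X i

instance PreUltralimit.pseudoEMetricSpace (𝒰 : Ultrafilter ℕ) (X : ℕ → Type u)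
    [∀ i, MetricSpace (X i)] : PseudoEMetricSpace (PreUltralimit 𝒰 X) where
  edist x y := ultraLim 𝒰 fun i => edist (x i) (y i)
  edist_self x := ultraLim_eq 𝒰 (by simp [tendsto_const_nhds])
  edist_comm x y := by simp only [edist_comm]
  edist_triangle x y z := by
    have hxy := tendsto_ultraLim 𝒰 fun i => edist (x i) (y i)
    have hyz := tendsto_ultraLim 𝒰 fun i => edist (y i) (z i)
    have hxz := tendsto_ultraLim 𝒰 fun i => edist (x i) (z i)
    exact le_of_tendsto_of_tendsto' hxz (hxy.add hyz) fun i => edist_triangle _ _ _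

/-- The class of the base point sequence in the separation quotient. -/
def ultralimitRefPt (𝒰 : Ultrafilter ℕ) (X : ℕ → Type u) [∀ i, MetricSpace (X i)]
    (p : ∀ i, X i) : SeparationQuotient (PreUltralimit 𝒰 X) :=
  SeparationQuotient.mk p

/-- The ultralimit of a sequence of pointed metric spaces with respect to an ultrafilter:
sequences at finite limit distance from the base point sequence, two sequences being
identified when the ultralimit of their mutual distances vanishes. -/
def Ultralimit (𝒰 : Ultrafilter ℕ) (X : ℕ → Type u) [∀ i, MetricSpace (X i)]
    (p : ∀ i, X i) : Type u :=
  { q : SeparationQuotient (PreUltralimit 𝒰 X) // edist q (ultralimitRefPt 𝒰 X p) ≠ ⊤ }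

instance Ultralimit.emetricSpace (𝒰 : Ultrafilter ℕ) (X : ℕ → Type u)
    [∀ i, MetricSpace (X i)] (p : ∀ i, X i) : EMetricSpace (Ultralimit 𝒰 X p) := by
  unfold Ultralimit; infer_instance

instance Ultralimit.metricSpace (𝒰 : Ultrafilter ℕ) (X : ℕ → Type u)
    [∀ i, MetricSpace (X i)] (p : ∀ i, X i) : MetricSpace (Ultralimit 𝒰 X p) :=
  EMetricSpace.toMetricSpace (by
    rintro ⟨x, hx⟩ ⟨y, hy⟩
    show edist x y ≠ ⊤
    have h1 : edist x y ≤ edist x (ultralimitRefPt 𝒰 X p) +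
        edist (ultralimitRefPt 𝒰 X p) y := edist_triangle _ _ _
    have h2 : edist x (ultralimitRefPt 𝒰 X p) + edist (ultralimitRefPt 𝒰 X p) y ≠ ⊤ :=
      ENNReal.add_ne_top.2 ⟨hx, by rw [edist_comm]; exact hy⟩
    exact fun h => h2 (top_le_iff.1 (h ▸ h1)))

/-- The canonical base point of an ultralimit. -/
def Ultralimit.basePt (𝒰 : Ultrafilter ℕ) (X : ℕ → Type u) [∀ i, MetricSpace (X i)]
    (p : ∀ i, X i) : Ultralimit 𝒰 X p :=
  ⟨ultralimitRefPt 𝒰 X p, by simp⟩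

/-! ### Pointed Gromov–Hausdorff convergence, cones -/

/-- An `ε`-approximation between two metric spaces. -/
def IsApproximation {X : Type u} {Y : Type v} [MetricSpace X] [MetricSpace Y]
    (ε : ℝ) (f : X → Y) (g : Y → X) : Prop :=
  (∀ x y : X, |dist x y - dist (f x) (f y)| < ε) ∧
  (∀ x y : Y, |dist x y - dist (g x) (g y)| < ε) ∧
  (∀ x : X, dist (g (f x)) x < ε) ∧
  (∀ y : Y, dist (f (g y)) y < ε)

/-- Convergence of a sequence of pointed metric spaces in the pointed Gromov–Hausdorff
topology, via approximation maps respecting the base points. -/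
def TendstoPointedGH (X : ℕ → Type u) [∀ i, MetricSpace (X i)] (p : ∀ i, X i)
    (Y : Type v) [MetricSpace Y] (q : Y) : Prop :=
  ∃ (ε : ℕ → ℝ) (f : ∀ i, X i → Y) (g : ∀ i, Y → X i),
    (∀ i, 0 < ε i) ∧ Tendsto ε atTop (𝓝 0) ∧
    ∀ i, IsApproximation (ε i) (f i) (g i) ∧ f i (p i) = q ∧ g i q = p i

/-- `(Y, y)` is a tangent cone of `X` at `p`: there are points `pᵢ → p` and scales
`rᵢ → ∞` such that for every `R > 0` the rescaled closed balls `rᵢ B(pᵢ, R/rᵢ)` converge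
to `B(y, R)` in the pointed Gromov–Hausdorff topology. -/
def IsTangentCone (X : Type u) [MetricSpace X] (p : X) (Y : Type v) [MetricSpace Y]
    (y : Y) : Prop :=
  ∃ (pt : ℕ → X) (r : ℕ → ℝ) (hr : ∀ i, 0 < r i),
    Tendsto pt atTop (𝓝 p) ∧ Tendsto r atTop atTop ∧
    ∀ (R : ℝ) (hR : 0 < R),
      @TendstoPointedGH (fun i => ↥(Metric.closedBall (pt i) (R / r i)))
        (fun i => scaledSubMS _ (r i) (hr i))
        (fun i => ⟨pt i, Metric.mem_closedBall_self (le_of_lt (div_pos hR (hr i)))⟩)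
        ↥(Metric.closedBall y R) _ ⟨y, Metric.mem_closedBall_self hR.le⟩

/-- `(Y, y)` is an asymptotic cone of `X` at `p`: as for tangent cones, but with
scales `rᵢ → 0`. -/
def IsAsymptoticCone (X : Type u) [MetricSpace X] (p : X) (Y : Type v) [MetricSpace Y]
    (y : Y) : Prop :=
  ∃ (pt : ℕ → X) (r : ℕ → ℝ) (hr : ∀ i, 0 < r i),
    Tendsto pt atTop (𝓝 p) ∧ Tendsto r atTop (𝓝 0) ∧
    ∀ (R : ℝ) (hR : 0 < R),
      @TendstoPointedGH (fun i => ↥(Metric.closedBall (pt i) (R / r i)))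
        (fun i => scaledSubMS _ (r i) (hr i))
        (fun i => ⟨pt i, Metric.mem_closedBall_self (le_of_lt (div_pos hR (hr i)))⟩)
        ↥(Metric.closedBall y R) _ ⟨y, Metric.mem_closedBall_self hR.le⟩

/-! ### Length spaces and `(ω₀+1)`-spaces -/

/-- A length space: the (extended) distance between two points is the infimum of the
lengths of the paths joining them. -/
def IsLengthSpace (X : Type u) [MetricSpace X] : Prop :=
  ∀ x y : X, edist x y = ⨅ γ : Path x y, eVariationOn γ Set.univ

/-- A metric space whose topology is that of the one-point compactification of a countable
discrete space. -/
def IsOmegaPlusOneSpace (X : Type u) [TopologicalSpace X] : Prop :=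
  Nonempty (X ≃ₜ OnePoint ℕ)


/-- The distance of the scaled subspace metric. -/
lemma scaledSubMS_dist {X : Type*} [MetricSpace X] (A : Set X) (h : ℝ) (hh : 0 < h)
    (x y : A) : @dist _ (scaledSubMS A h hh).toDist x y = h * dist (x : X) (y : X) := rfl

/-- `ghDist` is bounded by the Hausdorff distance of any pair of isometric copies. -/
lemma ghDist_le_hausdorff {X : Type u} {Y : Type v} [MetricSpace X] [MetricSpace Y]
    (Z : Type (max u v)) [iZ : MetricSpace Z] (f : X → Z) (g : Y → Z)
    (hf : Isometry f) (hg : Isometry g) :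
    ghDist X Y ≤ EMetric.hausdorffEdist (Set.range f) (Set.range g) :=
  iInf_le_of_le Z <| iInf_le_of_le iZ <| iInf_le_of_le f <| iInf_le_of_le g <|
    iInf_le_of_le hf <| iInf_le_of_le hg le_rfl

/-- From a strict bound on `ghDist` we may extract a common ambient space. -/
lemma exists_of_ghDist_lt {X : Type u} {Y : Type v} [MetricSpace X] [MetricSpace Y]
    {c : ℝ≥0∞} (h : ghDist X Y < c) :
    ∃ (Z : Type (max u v)) (_ : MetricSpace Z) (f : X → Z) (g : Y → Z)
      (_ : Isometry f) (_ : Isometry g),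
      EMetric.hausdorffEdist (Set.range f) (Set.range g) < c := by
  simpa only [ghDist, iInf_lt_iff] using h

/-- **Proposition 4.2.** If `U` is a separable `𝔖`-universal metric space and `Q` a
countable dense subset of `U`, then the pseudo-cones of `Q` are exactly the separable
metric spaces. -/
theorem isPseudoCone_of_countable_dense_in_universal {U : Type u} [MetricSpace U]
    (hUsep : TopologicalSpace.SeparableSpace U)
    (hUuniv : ∀ (S : Type u) (_ : MetricSpace S), TopologicalSpace.SeparableSpace S →
      ∃ f : S → U, Isometry f)
    (Q : Set U) (hQc : Q.Countable) (hQd : Dense Q) :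
    (∀ (P : Type u) (_ : MetricSpace P), TopologicalSpace.SeparableSpace P →
      IsPseudoCone ↥Q P) ∧
    (∀ (P : Type u) (_ : MetricSpace P), IsPseudoCone ↥Q P →
      TopologicalSpace.SeparableSpace P) := by
  haveI : Countable ↥Q := hQc.to_subtype
  constructor
  · -- every separable space is a pseudo-cone of `Q`
    intro P instP hPsep
    letI := instP
    obtain ⟨f, hf⟩ := hUuniv P instP hPsep
    refine ⟨fun i => {q : ↥Q | ∃ p : P, dist (q : U) (f p) < 1 / (i + 1 : ℝ)},
      fun _ => 1, fun _ => one_pos, ?_⟩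
    have h0 : Tendsto (fun i : ℕ => ENNReal.ofReal (1 / (i + 1 : ℝ))) atTop (𝓝 0) := by
      rw [← ENNReal.ofReal_zero]
      exact ENNReal.tendsto_ofReal tendsto_one_div_add_atTop_nhds_zero_nat
    refine tendsto_of_tendsto_of_tendsto_of_le_of_le tendsto_const_nhds h0
      (fun i => zero_le) (fun i => ?_)
    set A : Set ↥Q := {q : ↥Q | ∃ p : P, dist (q : U) (f p) < 1 / (i + 1 : ℝ)} with hA
    letI mA := scaledSubMS A 1 one_pos
    have hipos : (0 : ℝ) < 1 / (i + 1 : ℝ) := by positivity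
    set ι : ↥A → U := fun a => ((a : ↥Q) : U) with hι
    have hιiso : @Isometry _ _ (mA.toPseudoMetricSpace.toPseudoEMetricSpace) _ ι := by
      refine @Isometry.of_dist_eq _ _ mA.toPseudoMetricSpace _ ι fun x y => ?_
      rw [scaledSubMS_dist, one_mul]
      exact (Subtype.dist_eq _ _).symm
    refine le_trans (ghDist_le_hausdorff U ι f hιiso hf) ?_
    apply EMetric.hausdorffEdist_le_of_mem_edist
    · rintro z ⟨a, rfl⟩
      obtain ⟨p, hp⟩ := a.2
      exact ⟨f p, ⟨p, rfl⟩, by rw [edist_dist]; exact ENNReal.ofReal_le_ofReal hp.le⟩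
    · rintro z ⟨p, rfl⟩
      obtain ⟨q, hqQ, hq⟩ := hQd.exists_dist_lt (f p) hipos
      refine ⟨ι ⟨⟨q, hqQ⟩, ⟨p, by rwa [dist_comm] at hq⟩⟩, ⟨_, rfl⟩, ?_⟩
      rw [edist_dist]
      refine ENNReal.ofReal_le_ofReal ?_
      simpa [hι, dist_comm] using hq.le
  · -- every pseudo-cone of `Q` is separable
    intro P instP hPC
    letI := instP
    classical
    by_cases hP : Nonempty P
    swap
    · haveI := not_nonempty_iff.mp hP
      infer_instance
    obtain ⟨p₀⟩ := hP
    obtain ⟨A, u, hu, htd⟩ := hPC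
    set c : ℕ → ℝ≥0∞ := fun n => 2 * ((n : ℝ≥0∞) + 1)⁻¹ with hc
    have hcpos : ∀ n : ℕ, ((n : ℝ≥0∞) + 1)⁻¹ ≠ 0 := fun n =>
      ENNReal.inv_ne_zero.mpr (by simp)
    have hctop : ∀ n : ℕ, ((n : ℝ≥0∞) + 1)⁻¹ ≠ ⊤ :=
      fun n => ENNReal.inv_ne_top.mpr (by simp)
    have hF : ∀ n : ℕ, ∃ j,
        @ghDist ↥(A j) P (scaledSubMS (A j) (u j) (hu j)) _ < c n := by
      intro n
      have := ENNReal.tendsto_nhds_zero.mp htd (((n : ℝ≥0∞) + 1)⁻¹)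
        (pos_iff_ne_zero.mpr (hcpos n))
      obtain ⟨j, hj⟩ := this.exists
      refine ⟨j, hj.trans_lt ?_⟩
      conv_lhs => rw [← one_mul (((n : ℝ≥0∞) + 1)⁻¹)]
      exact ENNReal.mul_lt_mul_left (hcpos n) (hctop n) ENNReal.one_lt_two
    choose j hj using hF
    choose Z iZ f g hfI hgI hH using fun n =>
      @exists_of_ghDist_lt _ P (scaledSubMS (A (j n)) (u (j n)) (hu (j n))) _ _ (hj n)
    set D : Set P := ⋃ n, Set.range (fun a : ↥(A (j n)) =>
      if h : ∃ p' : P, edist (g n p') (f n a) < c n then h.choose else p₀) with hD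
    refine ⟨⟨D, Set.countable_iUnion fun n => Set.countable_range _, ?_⟩⟩
    intro p
    rw [EMetric.mem_closure_iff]
    intro ε hε
    have hd4 : (0 : ℝ≥0∞) < ε / 4 := ENNReal.div_pos hε.ne' (by norm_num)
    obtain ⟨m, hm⟩ := ENNReal.exists_inv_nat_lt hd4.ne'
    -- find a point of `range (f m)` close to `g m p`
    have hH' : EMetric.hausdorffEdist (Set.range (g m)) (Set.range (f m)) < c m := by
      rw [EMetric.hausdorffEdist, Metric.hausdorffEDist_comm]; exact hH m
    obtain ⟨y, ⟨a, rfl⟩, hy⟩ :=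
      EMetric.exists_edist_lt_of_hausdorffEdist_lt (x := g m p) (Set.mem_range_self p) hH'
    have hex : ∃ p' : P, edist (g m p') (f m a) < c m := ⟨p, hy⟩
    set b : P := if h : ∃ p' : P, edist (g m p') (f m a) < c m then h.choose else p₀
      with hb
    have hbD : b ∈ D := Set.mem_iUnion.mpr ⟨m, ⟨a, rfl⟩⟩
    have hbe : edist (g m b) (f m a) < c m := by
      rw [hb, dif_pos hex]; exact hex.choose_spec
    refine ⟨b, hbD, ?_⟩
    have key : edist p b < c m + c m := by
      calc edist p b = edist (g m p) (g m b) := ((hgI m).edist_eq p b).symm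
        _ ≤ edist (g m p) (f m a) + edist (f m a) (g m b) := edist_triangle _ _ _
        _ < c m + c m := by
            refine ENNReal.add_lt_add hy ?_
            rwa [edist_comm]
    have h4 : c m + c m = 4 * ((m : ℝ≥0∞) + 1)⁻¹ := by rw [hc]; ring
    have hchain : (4 : ℝ≥0∞) * ((m : ℝ≥0∞) + 1)⁻¹ < ε := by
      have h1 : ((m : ℝ≥0∞) + 1)⁻¹ ≤ ((m : ℝ≥0∞))⁻¹ :=
        ENNReal.inv_le_inv' (by simp)
      have h2 : (4 : ℝ≥0∞) * ((m : ℝ≥0∞) + 1)⁻¹ ≤ 4 * ((m : ℝ≥0∞))⁻¹ :=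
        mul_le_mul_right h1 _
      have h3 : (4 : ℝ≥0∞) * ((m : ℝ≥0∞))⁻¹ < 4 * (ε / 4) :=
        ENNReal.mul_lt_mul_right (by norm_num) (by norm_num) hm
      calc (4 : ℝ≥0∞) * ((m : ℝ≥0∞) + 1)⁻¹ ≤ 4 * ((m : ℝ≥0∞))⁻¹ := h2
        _ < 4 * (ε / 4) := h3
        _ ≤ ε := ENNReal.mul_div_le
    calc edist p b < c m + c m := key
      _ = 4 * ((m : ℝ≥0∞) + 1)⁻¹ := h4
      _ < ε := hchain

end
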